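/- Let K be a field, A a K-algebra with finite algebra filtration F₀A ⊆ F₁A ⊆ ⋯ ⊆ F_dA = A (each FᵢA a subalgebra, FᵢA·FⱼA ⊆ F_{i+j}A for i+j ≤ d). Let Ω be a left A-module and M = M₀ ⊇ M₁ ⊇ ⋯ a glider representation inside Ω (FᵢA·Mⱼ ⊆ M_{j−i} for i ≤ j). If there exists n such that M = FₙA·Mₙ and M = F_{n+i}A·M_{n+i} for all i ≥ 0, then M = Mⱼ for all j, i.e., M equals its body. -/

import Mathlib

section Glider

variable {K A Ω : Type*} [CommSemiring K] [Semiring A] [Algebra K A]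
  [AddCommMonoid Ω] [Module K Ω] [Module A Ω]

theorem antitone_of_glide (F : ℕ → Subalgebra K A) (M : ℕ → Submodule K Ω)
    (hglide : ∀ i j : ℕ, i ≤ j → ∀ a ∈ F i, ∀ m ∈ M j, a • m ∈ M (j - i)) :
    Antitone M := by
  intro k j hkj m hm
  simpa [Nat.sub_sub_self hkj] using hglide (j - k) j (Nat.sub_le j k) 1 (F _).one_mem m hm

theorem span_smul_le_of_forall_smul_mem {S : Subalgebra K A} {N P : Submodule K Ω}
    (h : ∀ a ∈ S, ∀ m ∈ N, a • m ∈ P) :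
    Submodule.span K {x : Ω | ∃ a ∈ S, ∃ m ∈ N, x = a • m} ≤ P :=
  Submodule.span_le.mpr fun _ ⟨a, ha, m, hm, hx⟩ => hx ▸ h a ha m hm

end Glider

theorem glider_descends_to_body_general {K : Type*} [Field K] {A : Type*} [Ring A]
    [Algebra K A] (F : ℕ → Subalgebra K A) (d : ℕ)
    (htop : ∀ i, d ≤ i → F i = ⊤)
    {Ω : Type*} [AddCommGroup Ω] [Module K Ω] [Module A Ω]
    (M : ℕ → Submodule K Ω)
    (hglide : ∀ i j : ℕ, i ≤ j → ∀ a ∈ F i, ∀ m ∈ M j, a • m ∈ M (j - i))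
    (n : ℕ)
    (hgen : ∀ i : ℕ, M 0 ≤ Submodule.span K
      {x : Ω | ∃ a ∈ F (n + i), ∃ m ∈ M (n + i), x = a • m}) :
    ∀ j, M j = M 0 := by
  intro j
  refine le_antisymm (antitone_of_glide F M hglide (Nat.zero_le j)) ?_
  refine (hgen (d + j)).trans (span_smul_le_of_forall_smul_mem fun a _ m hm => ?_)
  -- `F (n + d) = A`, so every `a` moves `M (n + d + j)` down by `n + d` steps, into `M j`.
  have ha : a ∈ F (n + d) := by rw [htop _ (Nat.le_add_left d n)]; trivial
  simpa [show n + (d + j) - (n + d) = j by omega] using hglide _ _ (by omega) a ha m hm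

/-- For a finite algebra filtration `F₀A ⊆ ⋯ ⊆ F_dA = A` and a glider
representation `M₀ ⊇ M₁ ⊇ ⋯` inside an `A`-module `Ω`: if there is `n` with
`M = F_{n+i}A·M_{n+i}` for all `i ≥ 0`, then `M = Mⱼ` for all `j`, i.e. `M`
equals its body. -/
theorem glider_descends_to_body {K : Type*} [Field K] {A : Type*} [Ring A]
    [Algebra K A] (F : ℕ → Subalgebra K A) (hmono : Monotone F) (d : ℕ)
    (htop : ∀ i, d ≤ i → F i = ⊤)
    (hmul : ∀ i j : ℕ, ∀ a ∈ F i, ∀ b ∈ F j, a * b ∈ F (min (i + j) d))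
    {Ω : Type*} [AddCommGroup Ω] [Module K Ω] [Module A Ω] [IsScalarTower K A Ω]
    (M : ℕ → Submodule K Ω) (hdesc : ∀ i, M (i + 1) ≤ M i)
    (hglide : ∀ i j : ℕ, i ≤ j → ∀ a ∈ F i, ∀ m ∈ M j, a • m ∈ M (j - i))
    (n : ℕ)
    (hgen : ∀ i : ℕ, M 0 ≤ Submodule.span K
      {x : Ω | ∃ a ∈ F (n + i), ∃ m ∈ M (n + i), x = a • m}) :
    ∀ j, M j = M 0 :=
  glider_descends_to_body_general F d htop M hglide n hgen
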